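/- arXiv:1310.5849 — 5 statements merged into one kernel-verified Lean document; each statement's English description precedes it below -/
import Mathlib

section
/- For all λ, μ > 0, t ≥ 0, k ∈ ℤ and real z > 0, the series Σ_{j∈ℤ} z^{2j}·p_{2k,2j}(t;λ,μ) converges absolutely and equals e^{−(λ+μ)t}·(z^{2k}/h(z))·[ h(z)·cosh(t·h(z)/z) + z(μ−λ)·sinh(t·h(z)/z) ]. -/
open scoped BigOperators

/-- Inner binomial sum `∑_{k=0}^{n-m} C(n,k) C(n,k+m) ρ^{-2k-m}`. -/
noncomputable def innerSum (ρ : ℝ) (m n : ℕ) : ℝ :=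
  ∑ k ∈ Finset.range (n - m + 1),
    (n.choose k : ℝ) * (n.choose (k + m) : ℝ) * ρ ^ (-(2 * (k : ℤ) + (m : ℤ)))

/-- Series `∑_{n≥m} [x^{2n}/(2n)! + c·x^{2n+1}/(2n+1)!]·innerSum ρ m n`. -/
noncomputable def evenSeries (x c ρ : ℝ) (m : ℕ) : ℝ :=
  ∑' j : ℕ,
    ((x ^ (2 * (m + j)) / (2 * (m + j)).factorial) +
      c * (x ^ (2 * (m + j) + 1) / (2 * (m + j) + 1).factorial)) * innerSum ρ m (m + j)

/-- Series `∑_{n≥m} x^{2n+1}/(2n+1)!·innerSum ρ m n`. -/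
noncomputable def oddSeries (x ρ : ℝ) (m : ℕ) : ℝ :=
  ∑' j : ℕ,
    (x ^ (2 * (m + j) + 1) / (2 * (m + j) + 1).factorial) * innerSum ρ m (m + j)

/-- `p_{2l,2r}(t;λ,μ)`. -/
noncomputable def pEE (lam mu t : ℝ) (l r : ℤ) : ℝ :=
  Real.exp (-(lam + mu) * t) *
    evenSeries (lam * t) ((mu - lam) / lam) (lam / mu) (r - l).natAbs

/-- `p_{2l,2r+1}(t;λ,μ)`. -/
noncomputable def pEO (lam mu t : ℝ) (l r : ℤ) : ℝ :=
  Real.exp (-(lam + mu) * t) *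
    (oddSeries (lam * t) (lam / mu) (r - l).natAbs +
      oddSeries (lam * t) (lam / mu) (r - l + 1).natAbs)

/-- `p_{2l+1,2r}(t;λ,μ)`. -/
noncomputable def pOE (lam mu t : ℝ) (l r : ℤ) : ℝ :=
  Real.exp (-(lam + mu) * t) *
    (oddSeries (mu * t) (mu / lam) (r - l - 1).natAbs +
      oddSeries (mu * t) (mu / lam) (r - l).natAbs)

/-- `p_{2l+1,2r+1}(t;λ,μ)`. -/
noncomputable def pOO (lam mu t : ℝ) (l r : ℤ) : ℝ :=
  Real.exp (-(lam + mu) * t) *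
    evenSeries (mu * t) ((lam - mu) / mu) (mu / lam) (r - l).natAbs

/-- Transition probability `p_{k,n}(t;λ,μ)`, by parity of the states. -/
noncomputable def transP (lam mu t : ℝ) (k n : ℤ) : ℝ :=
  if k % 2 = 0 then
    if n % 2 = 0 then pEE lam mu t (k / 2) (n / 2)
    else pEO lam mu t (k / 2) ((n - 1) / 2)
  else
    if n % 2 = 0 then pOE lam mu t ((k - 1) / 2) (n / 2)
    else pOO lam mu t ((k - 1) / 2) ((n - 1) / 2)

/-- `h(z) = √((μz²+λ)(λz²+μ))`. -/
noncomputable def hFun (lam mu z : ℝ) : ℝ := Real.sqrt ((mu * z ^ 2 + lam) * (lam * z ^ 2 + mu))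

/-! With `ρ = λ/μ`, `innerSum ρ |d| n` is the coefficient of `w ^ d` in the Laurent polynomial
`((1 + w/ρ) (1 + 1/(wρ))) ^ n`. Summing over `j` before `n` therefore turns
`∑ⱼ z^{2j} p_{2k,2j}(t)` into `e^{-(λ+μ)t} z^{2k} ∑ₙ aₙ G ^ n` with `G = (1 + z²/ρ)(1 + 1/(z²ρ))
= (h(z)/(λz))²`, where `aₙ` are the coefficients of the series `evenSeries`; with `r = √G` this is
the power series of `cosh(λtr) + (μ-λ)/(λr) · sinh(λtr)`. The same computation with `|aₙ|`
bounds the double series absolutely, which justifies the interchange. -/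

lemma innerSum_nonneg {ρ : ℝ} (hρ : 0 ≤ ρ) (m n : ℕ) : 0 ≤ innerSum ρ m n :=
  Finset.sum_nonneg fun _ _ => by positivity

lemma innerSum_eq_zero_of_lt (ρ : ℝ) {m n : ℕ} (h : n < m) : innerSum ρ m n = 0 := by
  simp [innerSum, Nat.sub_eq_zero_of_le h.le, Nat.choose_eq_zero_of_lt h]

lemma innerSum_eq_sum_range (ρ : ℝ) (m n : ℕ) :
    innerSum ρ m n = ∑ a ∈ Finset.range (n + 1),
      (n.choose a : ℝ) * n.choose (a + m) * ρ⁻¹ ^ (a + (a + m)) := by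
  have hpow : ∀ a : ℕ, ρ ^ (-(2 * (a : ℤ) + m)) = ρ⁻¹ ^ (a + (a + m)) := fun a => by
    rw [zpow_neg, ← inv_zpow, show 2 * (a : ℤ) + m = ((a + (a + m) : ℕ) : ℤ) by push_cast; ring,
      zpow_natCast]
  simp only [innerSum, hpow]
  refine Finset.sum_subset (Finset.range_subset_range.2 (by omega)) fun a ha ha' => ?_
  simp only [Finset.mem_range] at ha ha'
  simp [Nat.choose_eq_zero_of_lt (show n < a + m by omega)]

/-- The coefficient of `w ^ d` in `(∑ₐ C(n,a) (ρ w)⁻¹ ^ a) * (∑_b C(n,b) (w / ρ) ^ b)`. -/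
noncomputable def binomPairSum (ρ : ℝ) (n : ℕ) (d : ℤ) : ℝ :=
  ∑ p ∈ (Finset.range (n + 1) ×ˢ Finset.range (n + 1)).filter (fun p => (p.2 : ℤ) - p.1 = d),
    (n.choose p.1 : ℝ) * n.choose p.2 * ρ⁻¹ ^ (p.1 + p.2)

lemma innerSum_eq_binomPairSum (ρ : ℝ) (m n : ℕ) : innerSum ρ m n = binomPairSum ρ n m := by
  rw [innerSum_eq_sum_range, binomPairSum, Finset.sum_filter, Finset.sum_product]
  refine Finset.sum_congr rfl fun a _ => ?_
  have hcond : ∀ b : ℕ, ((b : ℤ) - a = m) ↔ (a + m = b) := fun b => by omega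
  simp only [hcond, Finset.sum_ite_eq, Finset.mem_range]
  split_ifs with h
  · rfl
  · simp [Nat.choose_eq_zero_of_lt (show n < a + m by omega)]

lemma binomPairSum_neg (ρ : ℝ) (n : ℕ) (d : ℤ) : binomPairSum ρ n (-d) = binomPairSum ρ n d := by
  refine Finset.sum_nbij' Prod.swap Prod.swap (fun p hp => ?_) (fun p hp => ?_)
    (fun _ _ => rfl) (fun _ _ => rfl) (fun p _ => by simp only [Prod.fst_swap, Prod.snd_swap]; ring)
  all_goals
    simp only [Finset.mem_filter, Finset.mem_product, Prod.fst_swap, Prod.snd_swap] at hp ⊢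
    exact ⟨hp.1.symm, by omega⟩

lemma innerSum_natAbs_eq_binomPairSum (ρ : ℝ) (n : ℕ) (d : ℤ) :
    innerSum ρ d.natAbs n = binomPairSum ρ n d := by
  rcases Int.natAbs_eq d with h | h
  · rw [innerSum_eq_binomPairSum, ← h]
  · rw [innerSum_eq_binomPairSum, ← binomPairSum_neg, ← h]

lemma hasSum_zpow_mul_innerSum {w ρ : ℝ} (hw : w ≠ 0) (hρ : ρ ≠ 0) (n : ℕ) :
    HasSum (fun d : ℤ => w ^ d * innerSum ρ d.natAbs n)
      (((1 + w / ρ) * (1 + 1 / (w * ρ))) ^ n) := by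
  set S := Finset.range (n + 1) ×ˢ Finset.range (n + 1)
  set δ : ℕ × ℕ → ℤ := fun p => (p.2 : ℤ) - p.1
  simp only [innerSum_natAbs_eq_binomPairSum]
  have hterm : ∀ p : ℕ × ℕ, w ^ δ p * ((n.choose p.1 : ℝ) * n.choose p.2 * ρ⁻¹ ^ (p.1 + p.2))
      = (n.choose p.1 * (1 / (w * ρ)) ^ p.1) * (n.choose p.2 * (w / ρ) ^ p.2) := fun p => by
    simp only [δ, zpow_sub₀ hw, zpow_natCast, div_pow, mul_pow, inv_pow, pow_add, one_pow]
    field_simp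
  have hbinom : ∀ v : ℝ, (1 + v) ^ n = ∑ a ∈ Finset.range (n + 1), (n.choose a : ℝ) * v ^ a :=
    fun v => by rw [add_comm, add_pow]; simp [mul_comm]
  have hexpand : ((1 + w / ρ) * (1 + 1 / (w * ρ))) ^ n
      = ∑ d ∈ S.image δ, w ^ d * binomPairSum ρ n d := by
    calc ((1 + w / ρ) * (1 + 1 / (w * ρ))) ^ n
        = ∑ p ∈ S, w ^ δ p * ((n.choose p.1 : ℝ) * n.choose p.2 * ρ⁻¹ ^ (p.1 + p.2)) := by
          rw [mul_pow, mul_comm, hbinom, hbinom, Finset.sum_mul_sum, Finset.sum_congr rfl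
            fun p _ => hterm p, Finset.sum_product]
      _ = ∑ d ∈ S.image δ, w ^ d * binomPairSum ρ n d := by
          rw [← Finset.sum_fiberwise_of_maps_to (g := δ) (t := S.image δ)
            (fun p hp => Finset.mem_image_of_mem δ hp)]
          refine Finset.sum_congr rfl fun d _ => ?_
          rw [binomPairSum, Finset.mul_sum]
          exact Finset.sum_congr rfl fun p hp => by rw [← (Finset.mem_filter.1 hp).2]
  rw [hexpand]
  refine hasSum_sum_of_ne_finset_zero fun d hd =>
    mul_eq_zero_of_right _ (Finset.sum_eq_zero fun p hp => absurd ?_ hd)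
  rw [Finset.mem_filter] at hp
  exact Finset.mem_image.2 ⟨p, hp⟩

lemma hasSum_zpow_two_mul_mul_innerSum {z ρ : ℝ} (hz : z ≠ 0) (hρ : ρ ≠ 0) (k : ℤ) (n : ℕ) :
    HasSum (fun j : ℤ => z ^ (2 * j) * innerSum ρ (j - k).natAbs n)
      (z ^ (2 * k) * ((1 + z ^ 2 / ρ) * (1 + 1 / (z ^ 2 * ρ))) ^ n) := by
  have hshift := ((Equiv.subRight k).hasSum_iff.2
    (hasSum_zpow_mul_innerSum (pow_ne_zero 2 hz) hρ n)).mul_left (z ^ (2 * k))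
  refine hshift.congr_fun fun j => ?_
  simp only [Function.comp_apply, Equiv.subRight_apply, ← mul_assoc]
  rw [← zpow_natCast, ← zpow_mul, ← zpow_add₀ hz]
  congr 3
  push_cast
  ring

lemma summable_abs_and_hasSum_tsum_mul {α β : Type*} {a : α → ℝ} {g : α → β → ℝ} {s : α → ℝ}
    (hg : ∀ n j, 0 ≤ g n j) (hs : ∀ n, HasSum (g n) (s n))
    (ha : Summable fun n => |a n| * s n) :
    Summable (fun j => |∑' n, a n * g n j|) ∧
      HasSum (fun j => ∑' n, a n * g n j) (∑' n, a n * s n) := by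
  set F : α × β → ℝ := fun p => a p.1 * g p.1 p.2
  have habsF : ∀ p, |F p| = |a p.1| * g p.1 p.2 := fun p => by
    rw [abs_mul, abs_of_nonneg (hg _ _)]
  have hF : Summable fun p => |F p| := by
    refine (summable_prod_of_nonneg fun p => abs_nonneg _).2 ⟨fun n => ?_, ?_⟩
    · simpa only [habsF] using ((hs n).mul_left |a n|).summable
    · exact ha.congr fun n => by simp only [habsF, tsum_mul_left, (hs n).tsum_eq]
  have hFswap : Summable fun p : β × α => |F p.swap| := hF.prod_symm
  have hcolAbs : ∀ j, Summable fun n => |a n * g n j| := hFswap.prod_factor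
  have hcol : ∀ j, HasSum (fun n => F (n, j)) (∑' n, a n * g n j) := fun j =>
    (hcolAbs j).of_abs.hasSum
  have hrow : HasSum (fun n => a n * s n) (∑' p, F p) :=
    hF.of_abs.hasSum.prod_fiberwise fun n => (hs n).mul_left (a n)
  refine ⟨hFswap.prod.of_nonneg_of_le (fun j => abs_nonneg _) fun j => ?_, ?_⟩
  · exact norm_tsum_le_tsum_norm (f := fun n => a n * g n j) (hcolAbs j)
  · rw [hrow.tsum_eq]
    exact ((Equiv.prodComm β α).hasSum_iff.2 hF.of_abs.hasSum).prod_fiberwise hcol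

noncomputable def evenSeriesCoeff (x c : ℝ) (n : ℕ) : ℝ :=
  x ^ (2 * n) / (2 * n).factorial + c * (x ^ (2 * n + 1) / (2 * n + 1).factorial)

lemma evenSeries_eq_tsum (x c ρ : ℝ) (m : ℕ) :
    evenSeries x c ρ m = ∑' n, evenSeriesCoeff x c n * innerSum ρ m n := by
  unfold evenSeries
  refine (add_right_injective m).tsum_eq (f := fun n => evenSeriesCoeff x c n * innerSum ρ m n)
    fun n hn => ?_
  rcases le_or_gt m n with h | h
  · exact ⟨n - m, Nat.add_sub_cancel' h⟩
  · exact absurd (by simp only [innerSum_eq_zero_of_lt ρ h, mul_zero]) hn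

lemma hasSum_evenSeriesCoeff_mul_sq_pow (x c : ℝ) {r : ℝ} (hr : r ≠ 0) :
    HasSum (fun n => evenSeriesCoeff x c n * (r ^ 2) ^ n)
      (Real.cosh (x * r) + c / r * Real.sinh (x * r)) := by
  refine ((Real.hasSum_cosh (x * r)).add ((Real.hasSum_sinh (x * r)).mul_left (c / r))).congr_fun
    fun n => ?_
  rw [evenSeriesCoeff, ← pow_mul, mul_pow, mul_pow, pow_succ x, pow_succ r]
  field_simp

lemma summable_abs_evenSeriesCoeff_mul_sq_pow {x : ℝ} (hx : 0 ≤ x) (c : ℝ) {r : ℝ} (hr : r ≠ 0) :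
    Summable fun n => |evenSeriesCoeff x c n| * (r ^ 2) ^ n := by
  refine (hasSum_evenSeriesCoeff_mul_sq_pow x |c| hr).summable.of_nonneg_of_le
    (fun n => by positivity) fun n => mul_le_mul_of_nonneg_right ?_ (by positivity)
  have h0 : 0 ≤ x ^ (2 * n) / ((2 * n).factorial : ℝ) := by positivity
  have h1 : 0 ≤ x ^ (2 * n + 1) / ((2 * n + 1).factorial : ℝ) := by positivity
  refine (abs_add_le _ _).trans_eq ?_
  rw [abs_mul, abs_of_nonneg h0, abs_of_nonneg h1, evenSeriesCoeff]

lemma transP_two_mul_two_mul (lam mu t : ℝ) (k j : ℤ) :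
    transP lam mu t (2 * k) (2 * j) = pEE lam mu t k j := by
  simp [transP]

lemma zpow_two_mul_mul_transP_eq_tsum (lam mu t z : ℝ) (k j : ℤ) :
    z ^ (2 * j) * transP lam mu t (2 * k) (2 * j) = Real.exp (-(lam + mu) * t) *
      ∑' n, evenSeriesCoeff (lam * t) ((mu - lam) / lam) n *
        (z ^ (2 * j) * innerSum (lam / mu) (j - k).natAbs n) := by
  rw [transP_two_mul_two_mul, pEE, evenSeries_eq_tsum, mul_left_comm, ← tsum_mul_left]
  exact congrArg _ (tsum_congr fun n => by ring)

lemma one_add_sq_div_mul_one_add_one_div_eq {lam mu z : ℝ} (hlam : 0 < lam) (hmu : 0 < mu)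
    (hz : 0 < z) :
    (1 + z ^ 2 / (lam / mu)) * (1 + 1 / (z ^ 2 * (lam / mu))) = (hFun lam mu z / (lam * z)) ^ 2 := by
  rw [div_pow, hFun, Real.sq_sqrt (by positivity)]
  field_simp
  ring

/-- Even–even generating function: `∑_{j∈ℤ} z^{2j} p_{2k,2j}(t)` converges absolutely and
equals `e^{-(λ+μ)t}·(z^{2k}/h(z))·[h(z)cosh(t h(z)/z) + z(μ-λ)sinh(t h(z)/z)]`. -/
theorem even_generating_function (lam mu : ℝ) (hlam : 0 < lam) (hmu : 0 < mu)
    (t : ℝ) (ht : 0 ≤ t) (k : ℤ) (z : ℝ) (hz : 0 < z) :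
    Summable (fun j : ℤ => |z ^ (2 * j) * transP lam mu t (2 * k) (2 * j)|) ∧
    ∑' j : ℤ, z ^ (2 * j) * transP lam mu t (2 * k) (2 * j) =
      Real.exp (-(lam + mu) * t) * (z ^ (2 * k) / hFun lam mu z) *
        (hFun lam mu z * Real.cosh (t * hFun lam mu z / z) +
          z * (mu - lam) * Real.sinh (t * hFun lam mu z / z)) := by
  set a := evenSeriesCoeff (lam * t) ((mu - lam) / lam)
  have hh : 0 < hFun lam mu z := Real.sqrt_pos.2 (by positivity)
  have hr : hFun lam mu z / (lam * z) ≠ 0 := by positivity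
  obtain ⟨habs, hsum⟩ := summable_abs_and_hasSum_tsum_mul (a := a)
    (s := fun n => z ^ (2 * k) * ((hFun lam mu z / (lam * z)) ^ 2) ^ n)
    (fun n j => mul_nonneg (zpow_nonneg hz.le _) (innerSum_nonneg (by positivity) _ _))
    (fun n => one_add_sq_div_mul_one_add_one_div_eq hlam hmu hz ▸
      hasSum_zpow_two_mul_mul_innerSum hz.ne' (by positivity) k n)
    (((summable_abs_evenSeriesCoeff_mul_sq_pow (mul_nonneg hlam.le ht) _ hr).mul_left
      (z ^ (2 * k))).congr fun n => by ring)
  have hvalue : ∑' n, a n * (z ^ (2 * k) * ((hFun lam mu z / (lam * z)) ^ 2) ^ n)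
      = z ^ (2 * k) * (Real.cosh (t * hFun lam mu z / z)
        + (mu - lam) / lam / (hFun lam mu z / (lam * z)) * Real.sinh (t * hFun lam mu z / z)) := by
    simp_rw [mul_left_comm _ (z ^ (2 * k))]
    rw [tsum_mul_left, (hasSum_evenSeriesCoeff_mul_sq_pow _ _ hr).tsum_eq]
    field_simp
  simp only [zpow_two_mul_mul_transP_eq_tsum, abs_mul, abs_of_pos (Real.exp_pos _)]
  refine ⟨habs.mul_left _, ?_⟩
  rw [tsum_mul_left, hsum.tsum_eq, hvalue]
  field_simp
end

section
/- Let λ, μ > 0 and z > 0 be real, and define the 2×2 real matrices A := [[−2λ, μ(z²+1)/z], [λ(z²+1)/z, −2μ]], S := [[μ−λ−h(z)/z, μ−λ+h(z)/z], [λ(z²+1)/z, λ(z²+1)/z]], and V := diag(v₁, v₂) with v₁ := −(λ+μ) − h(z)/z and v₂ := −(λ+μ) + h(z)/z. Then S is invertible with S⁻¹ = −z/(2λ(z²+1)h(z)) · [[λ(z²+1), z(λ−μ)−h(z)], [−λ(z²+1), z(μ−λ)−h(z)]], and A = S·V·S⁻¹. -/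
namespace Matrix

theorem fin_two_mul_eq_mul_diagonal {R : Type*} [CommRing R] {a b c d p₁ p₂ v₁ v₂ : R}
    (hv₁ : p₁ + d = v₁) (hv₂ : p₂ + d = v₂)
    (hp₁ : p₁ ^ 2 + (d - a) * p₁ = b * c) (hp₂ : p₂ ^ 2 + (d - a) * p₂ = b * c) :
    !![a, b; c, d] * !![p₁, p₂; c, c] = !![p₁, p₂; c, c] * !![v₁, 0; 0, v₂] := by
  subst hv₁ hv₂
  ext i j
  fin_cases i <;> fin_cases j <;> simp [Matrix.mul_apply, Fin.sum_univ_two]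
  · linear_combination -hp₁
  · linear_combination -hp₂
  all_goals ring

theorem eq_mul_mul_of_mul_eq_mul {R : Type*} [Semiring R] {n : Type*} [Fintype n] [DecidableEq n]
    {A S V T : Matrix n n R} (hST : S * T = 1) (hAS : A * S = S * V) : A = S * V * T := by
  rw [← hAS, Matrix.mul_assoc, hST, Matrix.mul_one]

end Matrix

theorem hFun_pos {lam mu z : ℝ} (hlam : 0 < lam) (hmu : 0 < mu) : 0 < hFun lam mu z :=
  Real.sqrt_pos.mpr (by positivity)

theorem hFun_sq {lam mu z : ℝ} (hlam : 0 < lam) (hmu : 0 < mu) :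
    hFun lam mu z ^ 2 = (mu * z ^ 2 + lam) * (lam * z ^ 2 + mu) :=
  Real.sq_sqrt (by positivity)

theorem eigenvector_condition_of_sq_eq_hFun {lam mu z p : ℝ} (hlam : 0 < lam) (hmu : 0 < mu)
    (hz : z ≠ 0) (hp : (p - (mu - lam)) ^ 2 = (hFun lam mu z / z) ^ 2) :
    p ^ 2 + (-2 * mu - -2 * lam) * p = mu * (z ^ 2 + 1) / z * (lam * (z ^ 2 + 1) / z) := by
  rw [div_pow, hFun_sq hlam hmu] at hp
  field_simp at hp ⊢
  linear_combination hp

/-- Diagonalization `A = S·V·S⁻¹` of the generating-function matrix, with the explicit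
inverse of `S`. -/
theorem matrix_diagonalization (lam mu z : ℝ) (hlam : 0 < lam) (hmu : 0 < mu) (hz : 0 < z) :
    let h : ℝ := hFun lam mu z
    let A : Matrix (Fin 2) (Fin 2) ℝ :=
      !![-2 * lam, mu * (z ^ 2 + 1) / z; lam * (z ^ 2 + 1) / z, -2 * mu]
    let S : Matrix (Fin 2) (Fin 2) ℝ :=
      !![mu - lam - h / z, mu - lam + h / z; lam * (z ^ 2 + 1) / z, lam * (z ^ 2 + 1) / z]
    let V : Matrix (Fin 2) (Fin 2) ℝ :=
      !![-(lam + mu) - h / z, 0; 0, -(lam + mu) + h / z]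
    let Sinv : Matrix (Fin 2) (Fin 2) ℝ :=
      (-z / (2 * lam * (z ^ 2 + 1) * h)) •
        !![lam * (z ^ 2 + 1), z * (lam - mu) - h; -(lam * (z ^ 2 + 1)), z * (mu - lam) - h]
    S * Sinv = 1 ∧ Sinv * S = 1 ∧ A = S * V * Sinv := by
  intro h A S V Sinv
  have hh : h ≠ 0 := (hFun_pos hlam hmu).ne'
  have hSSinv : S * Sinv = 1 := by
    ext i j
    fin_cases i <;> fin_cases j <;> simp [S, Sinv, Matrix.mul_apply, Fin.sum_univ_two] <;>
      field_simp <;> ring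
  have hAS : A * S = S * V :=
    Matrix.fin_two_mul_eq_mul_diagonal (by ring) (by ring)
      (eigenvector_condition_of_sq_eq_hFun hlam hmu hz.ne' (by ring))
      (eigenvector_condition_of_sq_eq_hFun hlam hmu hz.ne' (by ring))
  exact ⟨hSSinv, mul_eq_one_comm.mp hSSinv, Matrix.eq_mul_mul_of_mul_eq_mul hSSinv hAS⟩
end

section
/- Let λ, μ > 0 and let N ∈ ℤ be even. Then for all k, n ∈ ℤ and t ≥ 0: p_{N−k,N−n}(t;λ,μ) = p_{k,n}(t;λ,μ) and p_{N+k,N+n}(t;λ,μ) = p_{k,n}(t;λ,μ). -/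
open scoped BigOperators

section Helpers
variable (lam mu t : ℝ)

lemma pEE_congr {l r l' r' : ℤ} (h : (r - l).natAbs = (r' - l').natAbs) :
    pEE lam mu t l r = pEE lam mu t l' r' := by unfold pEE; rw [h]

lemma pOO_congr {l r l' r' : ℤ} (h : (r - l).natAbs = (r' - l').natAbs) :
    pOO lam mu t l r = pOO lam mu t l' r' := by unfold pOO; rw [h]

lemma pEO_congr {l r l' r' : ℤ} (h1 : (r - l).natAbs = (r' - l').natAbs)
    (h2 : (r - l + 1).natAbs = (r' - l' + 1).natAbs) :
    pEO lam mu t l r = pEO lam mu t l' r' := by unfold pEO; rw [h1, h2]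

lemma pEO_congr_swap {l r l' r' : ℤ} (h1 : (r - l).natAbs = (r' - l' + 1).natAbs)
    (h2 : (r - l + 1).natAbs = (r' - l').natAbs) :
    pEO lam mu t l r = pEO lam mu t l' r' := by unfold pEO; rw [h1, h2]; ring

lemma pOE_congr {l r l' r' : ℤ} (h1 : (r - l - 1).natAbs = (r' - l' - 1).natAbs)
    (h2 : (r - l).natAbs = (r' - l').natAbs) :
    pOE lam mu t l r = pOE lam mu t l' r' := by unfold pOE; rw [h1, h2]

lemma pOE_congr_swap {l r l' r' : ℤ} (h1 : (r - l - 1).natAbs = (r' - l').natAbs)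
    (h2 : (r - l).natAbs = (r' - l' - 1).natAbs) :
    pOE lam mu t l r = pOE lam mu t l' r' := by unfold pOE; rw [h1, h2]; ring

lemma transP_ee (l r : ℤ) : transP lam mu t (2 * l) (2 * r) = pEE lam mu t l r := by
  have h1 : (2 * l) % 2 = 0 := by omega
  have h2 : (2 * r) % 2 = 0 := by omega
  have h3 : (2 * l) / 2 = l := by omega
  have h4 : (2 * r) / 2 = r := by omega
  simp [transP, h1, h2, h3, h4]

lemma transP_eo (l r : ℤ) : transP lam mu t (2 * l) (2 * r + 1) = pEO lam mu t l r := by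
  have h1 : (2 * l) % 2 = 0 := by omega
  have h2 : (2 * r + 1) % 2 = 1 := by omega
  have h3 : (2 * l) / 2 = l := by omega
  have h4 : (2 * r + 1 - 1) / 2 = r := by omega
  simp [transP, h1, h2, h3, h4]

lemma transP_oe (l r : ℤ) : transP lam mu t (2 * l + 1) (2 * r) = pOE lam mu t l r := by
  have h1 : (2 * l + 1) % 2 = 1 := by omega
  have h2 : (2 * r) % 2 = 0 := by omega
  have h3 : (2 * l + 1 - 1) / 2 = l := by omega
  have h4 : (2 * r) / 2 = r := by omega
  simp [transP, h1, h2, h3, h4]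

lemma transP_oo (l r : ℤ) : transP lam mu t (2 * l + 1) (2 * r + 1) = pOO lam mu t l r := by
  have h1 : (2 * l + 1) % 2 = 1 := by omega
  have h2 : (2 * r + 1) % 2 = 1 := by omega
  have h3 : (2 * l + 1 - 1) / 2 = l := by omega
  have h4 : (2 * r + 1 - 1) / 2 = r := by omega
  simp [transP, h1, h2, h3, h4]

end Helpers

/-- Symmetry under reflection and translation by an even integer `N`. -/
theorem symmetry_even_shift (lam mu : ℝ) (hlam : 0 < lam) (hmu : 0 < mu)
    (N : ℤ) (hN : Even N) :
    ∀ k n : ℤ, ∀ t : ℝ, 0 ≤ t →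
      transP lam mu t (N - k) (N - n) = transP lam mu t k n ∧
      transP lam mu t (N + k) (N + n) = transP lam mu t k n := by
  obtain ⟨c, rfl⟩ := hN
  intro k n t ht
  rcases Int.even_or_odd k with ⟨a, rfl⟩ | ⟨a, rfl⟩ <;>
    rcases Int.even_or_odd n with ⟨b, rfl⟩ | ⟨b, rfl⟩
  · constructor
    · rw [show c + c - (a + a) = 2 * (c - a) by ring, show c + c - (b + b) = 2 * (c - b) by ring,
        show a + a = 2 * a by ring, show b + b = 2 * b by ring, transP_ee, transP_ee]
      exact pEE_congr _ _ _ (by omega)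
    · rw [show c + c + (a + a) = 2 * (c + a) by ring, show c + c + (b + b) = 2 * (c + b) by ring,
        show a + a = 2 * a by ring, show b + b = 2 * b by ring, transP_ee, transP_ee]
      exact pEE_congr _ _ _ (by omega)
  · constructor
    · rw [show c + c - (a + a) = 2 * (c - a) by ring,
        show c + c - (2 * b + 1) = 2 * (c - b - 1) + 1 by ring,
        show a + a = 2 * a by ring, transP_eo, transP_eo]
      exact pEO_congr_swap _ _ _ (by omega) (by omega)
    · rw [show c + c + (a + a) = 2 * (c + a) by ring,
        show c + c + (2 * b + 1) = 2 * (c + b) + 1 by ring,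
        show a + a = 2 * a by ring, transP_eo, transP_eo]
      exact pEO_congr _ _ _ (by omega) (by omega)
  · constructor
    · rw [show c + c - (2 * a + 1) = 2 * (c - a - 1) + 1 by ring,
        show c + c - (b + b) = 2 * (c - b) by ring,
        show b + b = 2 * b by ring, transP_oe, transP_oe]
      exact pOE_congr_swap _ _ _ (by omega) (by omega)
    · rw [show c + c + (2 * a + 1) = 2 * (c + a) + 1 by ring,
        show c + c + (b + b) = 2 * (c + b) by ring,
        show b + b = 2 * b by ring, transP_oe, transP_oe]
      exact pOE_congr _ _ _ (by omega) (by omega)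
  · constructor
    · rw [show c + c - (2 * a + 1) = 2 * (c - a - 1) + 1 by ring,
        show c + c - (2 * b + 1) = 2 * (c - b - 1) + 1 by ring, transP_oo, transP_oo]
      exact pOO_congr _ _ _ (by omega)
    · rw [show c + c + (2 * a + 1) = 2 * (c + a) + 1 by ring,
        show c + c + (2 * b + 1) = 2 * (c + b) + 1 by ring, transP_oo, transP_oo]
      exact pOO_congr _ _ _ (by omega)
end

section
/- Let λ, μ > 0 and let N ∈ ℤ be odd. Then for all k, n ∈ ℤ and t ≥ 0: p_{N−k,N−n}(t;λ,μ) = p_{k,n}(t;μ,λ) and p_{N+k,N+n}(t;λ,μ) = p_{k,n}(t;μ,λ). -/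
open scoped BigOperators

/-- Symmetry under reflection and translation by an odd integer `N`, with rates interchanged. -/
theorem symmetry_odd_shift (lam mu : ℝ) (hlam : 0 < lam) (hmu : 0 < mu)
    (N : ℤ) (hN : Odd N) :
    ∀ k n : ℤ, ∀ t : ℝ, 0 ≤ t →
      transP lam mu t (N - k) (N - n) = transP mu lam t k n ∧
      transP lam mu t (N + k) (N + n) = transP mu lam t k n := by
  obtain ⟨c, hc⟩ := hN
  intro k n t ht
  constructor <;>
  · rcases Int.even_or_odd k with ⟨a, ha⟩ | ⟨a, ha⟩ <;>
      rcases Int.even_or_odd n with ⟨b, hb⟩ | ⟨b, hb⟩ <;>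
    · simp only [transP]
      split_ifs <;> try omega
      all_goals
        simp only [pEE, pEO, pOE, pOO]
      all_goals rw [add_comm lam mu]
      all_goals
        try { congr 2; omega }
      all_goals
        · congr 1
          first
            | (congr 1 <;> congr 1 <;> omega)
            | (rw [add_comm]; congr 1 <;> congr 1 <;> omega)
end

section
/- Let λ, μ > 0 and s > 0. Define π₀(s) := [(2λ+s)(2μ+s) − A(s)B(s)] / (λ·[s(2μ+s) + A(s)B(s)]), and for every integer n ≥ 1 define π_{2n}(s) := (2μ+s)(λ+s)·(ψ₂²(s))^{n+1} / (λ²·[μ(1−ψ₂²(s)) − s·ψ₂²(s)]) and π_{2n−1}(s) := (λ+s)·(ψ₂²(s))ⁿ·(1+ψ₂²(s)) / (λ·[μ(1−ψ₂²(s)) − s·ψ₂²(s)]). Then the denominators s(2μ+s)+A(s)B(s) and μ(1−ψ₂²(s)) − s·ψ₂²(s) are nonzero, and the family (π_n(s))_{n≥0} satisfies the Laplace-transformed balance equations: (λ+s)·π₀(s) = μ·π₁(s); (2μ+s)·π₁(s) = 1 + λ·π₂(s) + λ·π₀(s); (2λ+s)·π_{2n}(s) = μ·π_{2n−1}(s)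 + μ·π_{2n+1}(s) for all n ≥ 1; and (2μ+s)·π_{2n−1}(s) = λ·π_{2n}(s) + λ·π_{2n−2}(s) for all n ≥ 2. -/
/-- `A(s) = √((a+s)²−a²)` with `a = λ+μ`. -/
noncomputable def Afun (lam mu s : ℝ) : ℝ :=
  Real.sqrt ((lam + mu + s) ^ 2 - (lam + mu) ^ 2)

/-- `B(s) = √((a+s)²−b²)` with `b = λ−μ`. -/
noncomputable def Bfun (lam mu s : ℝ) : ℝ :=
  Real.sqrt ((lam + mu + s) ^ 2 - (lam - mu) ^ 2)

/-- `ψ₂²(s) = (A(s)−B(s))²/(a²−b²)`. -/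
noncomputable def psi2sq (lam mu s : ℝ) : ℝ :=
  (Afun lam mu s - Bfun lam mu s) ^ 2 / ((lam + mu) ^ 2 - (lam - mu) ^ 2)

/-- Laplace transforms `π_n(s)`: `π₀`, and for `n ≥ 1` the values `π_{2n}` and `π_{2n−1}`. -/
noncomputable def piFun (lam mu s : ℝ) : ℕ → ℝ := fun n =>
  if n = 0 then
    ((2 * lam + s) * (2 * mu + s) - Afun lam mu s * Bfun lam mu s) /
      (lam * (s * (2 * mu + s) + Afun lam mu s * Bfun lam mu s))
  else if n % 2 = 0 then
    (2 * mu + s) * (lam + s) * (psi2sq lam mu s) ^ (n / 2 + 1) /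
      (lam ^ 2 * (mu * (1 - psi2sq lam mu s) - s * psi2sq lam mu s))
  else
    (lam + s) * (psi2sq lam mu s) ^ ((n + 1) / 2) * (1 + psi2sq lam mu s) /
      (lam * (mu * (1 - psi2sq lam mu s) - s * psi2sq lam mu s))

/-!
With `A = Afun λ μ s` and `B = Bfun λ μ s` we have `A² = s(2(λ+μ)+s)` and `B² = (2λ+s)(2μ+s)`, hence
`B² - A² = 4λμ` and `ψ₂² = (B - A)/(A + B)`. This makes `p = ψ₂²` a root of the characteristic
equation `λμ(1+p)² = (2λ+s)(2μ+s)p` of the two-step recurrence, which is all the interior balance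
equations need. The denominator `μ(1-p) - sp` equals `((2μ+s)A - sB)/(A+B)`, positive because
`((2μ+s)A)² - (sB)² = 4μs(2μ+s)(λ+μ+s)`. Since moreover `2μ(s(2μ+s) + AB) = (A+B)((2μ+s)A - sB)`,
`π₀ = μp(1+p)/(λ(μ(1-p) - sp))`, and the two boundary equations reduce to the characteristic
equation as well.
-/

section Explicit

variable {lam mu s : ℝ}

theorem Afun_sq (h : 0 ≤ s * (2 * (lam + mu) + s)) :
    Afun lam mu s ^ 2 = s * (2 * (lam + mu) + s) := by
  rw [Afun, ← Real.sq_sqrt h]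
  ring_nf

theorem Bfun_sq (h : 0 ≤ (2 * lam + s) * (2 * mu + s)) :
    Bfun lam mu s ^ 2 = (2 * lam + s) * (2 * mu + s) := by
  rw [Bfun, ← Real.sq_sqrt h]
  ring_nf

theorem psi2sq_eq_div (hA : 0 ≤ s * (2 * (lam + mu) + s))
    (hB : 0 ≤ (2 * lam + s) * (2 * mu + s)) :
    psi2sq lam mu s = (Bfun lam mu s - Afun lam mu s) / (Afun lam mu s + Bfun lam mu s) := by
  have hden : (lam + mu) ^ 2 - (lam - mu) ^ 2 =
      (Bfun lam mu s - Afun lam mu s) * (Afun lam mu s + Bfun lam mu s) := by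
    linear_combination Afun_sq hA - Bfun_sq hB
  rw [psi2sq, hden]
  rcases eq_or_ne (Bfun lam mu s - Afun lam mu s) 0 with h | h
  · simp [h]
  · rw [sub_sq_comm, sq, mul_div_mul_left _ _ h]

theorem piFun_zero : piFun lam mu s 0 =
    ((2 * lam + s) * (2 * mu + s) - Afun lam mu s * Bfun lam mu s) /
      (lam * (s * (2 * mu + s) + Afun lam mu s * Bfun lam mu s)) := rfl

theorem piFun_one : piFun lam mu s 1 =
    (lam + s) * psi2sq lam mu s * (1 + psi2sq lam mu s) /
      (lam * (mu * (1 - psi2sq lam mu s) - s * psi2sq lam mu s)) := by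
  simp [piFun]

theorem piFun_two : piFun lam mu s 2 =
    (2 * mu + s) * (lam + s) * psi2sq lam mu s ^ 2 /
      (lam ^ 2 * (mu * (1 - psi2sq lam mu s) - s * psi2sq lam mu s)) := by
  simp [piFun]

theorem piFun_two_mul {n : ℕ} (hn : n ≠ 0) : piFun lam mu s (2 * n) =
    (2 * mu + s) * (lam + s) * psi2sq lam mu s ^ (n + 1) /
      (lam ^ 2 * (mu * (1 - psi2sq lam mu s) - s * psi2sq lam mu s)) := by
  simp [piFun, hn]

theorem piFun_two_mul_sub_one {n : ℕ} (hn : n ≠ 0) : piFun lam mu s (2 * n - 1) =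
    (lam + s) * psi2sq lam mu s ^ n * (1 + psi2sq lam mu s) /
      (lam * (mu * (1 - psi2sq lam mu s) - s * psi2sq lam mu s)) := by
  have hpos : 2 * n - 1 ≠ 0 := by omega
  have hodd : (2 * n - 1) % 2 = 1 := by omega
  have hhalf : (2 * n - 1 + 1) / 2 = n := by omega
  simp [piFun, hpos, hodd, hhalf]

end Explicit

section Algebra

variable {lam mu s A B : ℝ}

theorem psi_char_eq (hA : A ^ 2 = s * (2 * (lam + mu) + s))
    (hB : B ^ 2 = (2 * lam + s) * (2 * mu + s)) (hAB : A + B ≠ 0) :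
    lam * mu * (1 + (B - A) / (A + B)) ^ 2 =
      (2 * lam + s) * (2 * mu + s) * ((B - A) / (A + B)) := by
  field_simp
  linear_combination (2 * lam + s) * (2 * mu + s) * hA +
    (4 * lam * mu - (2 * lam + s) * (2 * mu + s)) * hB

theorem psi_denom_eq (hAB : A + B ≠ 0) :
    mu * (1 - (B - A) / (A + B)) - s * ((B - A) / (A + B)) =
      ((2 * mu + s) * A - s * B) / (A + B) := by
  field_simp
  ring

theorem psi_denom_numerator_pos (hA : A ^ 2 = s * (2 * (lam + mu) + s))
    (hB : B ^ 2 = (2 * lam + s) * (2 * mu + s)) (hA0 : 0 ≤ A)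
    (hlam : 0 < lam) (hmu : 0 < mu) (hs : 0 < s) :
    0 < (2 * mu + s) * A - s * B := by
  have hsq : (s * B) ^ 2 < ((2 * mu + s) * A) ^ 2 := by
    have : ((2 * mu + s) * A) ^ 2 - (s * B) ^ 2 = 4 * mu * s * (2 * mu + s) * (lam + mu + s) := by
      linear_combination (2 * mu + s) ^ 2 * hA - s ^ 2 * hB
    rw [← sub_pos, this]
    positivity
  linarith [lt_of_pow_lt_pow_left₀ 2 (by positivity) hsq]

theorem pi_zero_eq_psi (hA : A ^ 2 = s * (2 * (lam + mu) + s))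
    (hB : B ^ 2 = (2 * lam + s) * (2 * mu + s)) (hAB : A + B ≠ 0)
    (hmu : mu ≠ 0) :
    ((2 * lam + s) * (2 * mu + s) - A * B) / (lam * (s * (2 * mu + s) + A * B)) =
      mu * ((B - A) / (A + B)) * (1 + (B - A) / (A + B)) /
        (lam * (mu * (1 - (B - A) / (A + B)) - s * ((B - A) / (A + B)))) := by
  have hN : (2 * lam + s) * (2 * mu + s) - A * B = B * (B - A) := by rw [← hB]; ring
  have hD : s * (2 * mu + s) + A * B = (A + B) * ((2 * mu + s) * A - s * B) / (2 * mu) := by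
    field_simp
    linear_combination -(2 * mu + s) * hA + s * hB
  rw [hN, hD, psi_denom_eq hAB]
  field_simp
  ring

end Algebra

section Balance

variable {lam mu s p D : ℝ}

theorem balance_one (hq : lam * mu * (1 + p) ^ 2 = (2 * lam + s) * (2 * mu + s) * p)
    (hlam : lam ≠ 0) (hD : mu * (1 - p) - s * p ≠ 0) :
    (2 * mu + s) * ((lam + s) * p * (1 + p) / (lam * (mu * (1 - p) - s * p))) =
      1 + lam * ((2 * mu + s) * (lam + s) * p ^ 2 / (lam ^ 2 * (mu * (1 - p) - s * p))) +
        lam * (mu * p * (1 + p) / (lam * (mu * (1 - p) - s * p))) := by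
  field_simp
  linear_combination -hq

theorem balance_even (n : ℕ) (hq : lam * mu * (1 + p) ^ 2 = (2 * lam + s) * (2 * mu + s) * p)
    (hlam : lam ≠ 0) (hD : D ≠ 0) :
    (2 * lam + s) * ((2 * mu + s) * (lam + s) * p ^ (n + 1) / (lam ^ 2 * D)) =
      mu * ((lam + s) * p ^ n * (1 + p) / (lam * D)) +
        mu * ((lam + s) * p ^ (n + 1) * (1 + p) / (lam * D)) := by
  field_simp
  linear_combination (-(lam + s) * p ^ n) * hq

theorem balance_odd (n : ℕ) (hlam : lam ≠ 0) :
    (2 * mu + s) * ((lam + s) * p ^ n * (1 + p) / (lam * D)) =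
      lam * ((2 * mu + s) * (lam + s) * p ^ (n + 1) / (lam ^ 2 * D)) +
        lam * ((2 * mu + s) * (lam + s) * p ^ n / (lam ^ 2 * D)) := by
  field_simp
  ring

end Balance

/-- The explicit family `(π_n(s))_{n≥0}` has nonzero denominators and satisfies the
Laplace-transformed balance equations of the reflected process started at state 1. -/
theorem laplace_balance_equations (lam mu s : ℝ) (hlam : 0 < lam) (hmu : 0 < mu) (hs : 0 < s) :
    s * (2 * mu + s) + Afun lam mu s * Bfun lam mu s ≠ 0 ∧
    mu * (1 - psi2sq lam mu s) - s * psi2sq lam mu s ≠ 0 ∧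
    (lam + s) * piFun lam mu s 0 = mu * piFun lam mu s 1 ∧
    (2 * mu + s) * piFun lam mu s 1 = 1 + lam * piFun lam mu s 2 + lam * piFun lam mu s 0 ∧
    (∀ n : ℕ, 1 ≤ n →
      (2 * lam + s) * piFun lam mu s (2 * n) =
        mu * piFun lam mu s (2 * n - 1) + mu * piFun lam mu s (2 * n + 1)) ∧
    (∀ n : ℕ, 2 ≤ n →
      (2 * mu + s) * piFun lam mu s (2 * n - 1) =
        lam * piFun lam mu s (2 * n) + lam * piFun lam mu s (2 * n - 2)) := by
  have hA := Afun_sq (lam := lam) (mu := mu) (s := s) (by positivity)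
  have hB := Bfun_sq (lam := lam) (mu := mu) (s := s) (by positivity)
  have hA0 : 0 ≤ Afun lam mu s := Real.sqrt_nonneg _
  have hB0 : 0 ≤ Bfun lam mu s := Real.sqrt_nonneg _
  have hE := psi_denom_numerator_pos hA hB hA0 hlam hmu hs
  have hAB : 0 < Afun lam mu s + Bfun lam mu s := by nlinarith
  have hp := psi2sq_eq_div (lam := lam) (mu := mu) (s := s) (by positivity) (by positivity)
  have hq := hp ▸ psi_char_eq hA hB hAB.ne'
  have hD : 0 < mu * (1 - psi2sq lam mu s) - s * psi2sq lam mu s := by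
    rw [hp, psi_denom_eq hAB.ne']
    positivity
  have h0 : piFun lam mu s 0 = mu * psi2sq lam mu s * (1 + psi2sq lam mu s) /
      (lam * (mu * (1 - psi2sq lam mu s) - s * psi2sq lam mu s)) := by
    rw [piFun_zero, hp]
    exact pi_zero_eq_psi hA hB hAB.ne' hmu.ne'
  refine ⟨(add_pos_of_pos_of_nonneg (by positivity) (mul_nonneg hA0 hB0)).ne', hD.ne',
    ?_, ?_, ?_, ?_⟩
  · rw [h0, piFun_one]
    ring
  · rw [h0, piFun_one, piFun_two]
    exact balance_one hq hlam.ne' hD.ne'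
  · intro n hn
    rw [piFun_two_mul (by omega), piFun_two_mul_sub_one (by omega),
      show 2 * n + 1 = 2 * (n + 1) - 1 by omega, piFun_two_mul_sub_one n.succ_ne_zero]
    exact balance_even n hq hlam.ne' hD.ne'
  · intro n hn
    obtain ⟨m, rfl⟩ : ∃ m, n = m + 1 := ⟨n - 1, by omega⟩
    rw [show 2 * (m + 1) - 2 = 2 * m by omega, piFun_two_mul_sub_one m.succ_ne_zero,
      piFun_two_mul m.succ_ne_zero, piFun_two_mul (by omega)]
    exact balance_odd (m + 1) hlam.ne'
end
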